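/- If a real polynomial p of degree n has all real roots and all coefficients nonnegative, then ∑_{k} a_k x^k / k! (where p(x) = ∑ a_k x^k) has all real roots, all of which are nonpositive. -/

import Mathlib

open Polynomial

/-- A real polynomial has all real roots: every complex root is real. -/
def AllRealRoots (p : ℝ[X]) : Prop :=
  ∀ z : ℂ, (p.map (algebraMap ℝ ℂ)).IsRoot z → z.im = 0

/-- The map sending x^k to x^k/k!. -/
noncomputable def Tfac (p : ℝ[X]) : ℝ[X] :=
  ∑ k ∈ Finset.range (p.natDegree + 1),
    Polynomial.C (p.coeff k / (Nat.factorial k)) * Polynomial.X ^ k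

/-- The n-th Laguerre polynomial (explicit formula). -/
noncomputable def laguerre (n : ℕ) : ℝ[X] :=
  ∑ k ∈ Finset.range (n + 1),
    Polynomial.C ((-1 : ℝ) ^ k * (n.choose k) / (Nat.factorial k)) * Polynomial.X ^ k

/-!
Write `p = c ∏ (X - rᵢ)` of degree `n` and let `D = d/dx`. Since `D^(n-k) (xⁿ/n!) = xᵏ/k!`,
`Tfac p = p*(D) (xⁿ/n!)` with `p* = reverse p = c ∏ (1 - rᵢ X)`, so it suffices that every operator
`D + a` preserves real-rootedness. By Rolle's theorem for `t ↦ exp (a t) f t`, the polynomial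
`f' + a f` has a root strictly between any two consecutive distinct roots of `f`, and a root of `f`
of multiplicity `m` is a root of `f' + a f` of multiplicity at least `m - 1`. So `f' + a f` misses
at most one of its roots over `ℝ`, and a real polynomial missing only one real root splits.
Nonnegativity of the roots then comes from the coefficients: `Tfac` keeps them nonnegative, and such
a nonzero polynomial is positive on `(0, ∞)`.
-/

open Set

namespace Polynomial

section Field

variable {K : Type*} [Field K]

theorem splits_of_natDegree_le_card_roots_add_one {f : K[X]}
    (h : f.natDegree ≤ Multiset.card f.roots + 1) : f.Splits := by
  obtain ⟨q, hfq, hdeg, -⟩ := f.exists_prod_multiset_X_sub_C_mul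
  rw [← hfq]
  refine (Splits.multisetProd fun g hg => ?_).mul (Splits.of_natDegree_le_one (by omega))
  obtain ⟨a, -, rfl⟩ := Multiset.mem_map.1 hg
  exact Splits.X_sub_C a

theorem Splits.reverse {f : K[X]} (hf : f.Splits) : f.reverse.Splits := by
  induction hf using Submonoid.closure_induction with
  | mem g hg =>
    rcases hg with ⟨a, rfl⟩ | ⟨a, rfl⟩
    · simp
    · exact Splits.of_natDegree_le_one ((reverse_natDegree_le _).trans (natDegree_X_add_C a).le)
  | one => rw [← C_1, reverse_C]; exact Splits.C 1
  | mul g h _ _ hg hh => rw [reverse_mul_of_domain]; exact hg.mul hh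

open Nat in
theorem iterate_derivative_C_inv_factorial_mul_X_pow [CharZero K] {n i : ℕ} (hi : i ≤ n) :
    derivative^[i] (C ((n ! : K)⁻¹) * X ^ n) = C (((n - i)! : K)⁻¹) * X ^ (n - i) := by
  rw [iterate_derivative_C_mul, iterate_derivative_X_pow_eq_C_mul, ← mul_assoc, ← C_mul,
    ← factorial_mul_descFactorial hi, cast_mul]
  have : (n.descFactorial i : K) ≠ 0 := cast_ne_zero.2 (descFactorial_pos.2 hi).ne'
  field_simp

end Field

theorem nonpos_of_isRoot_of_coeff_nonneg {R : Type*} [CommRing R] [LinearOrder R]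
    [IsStrictOrderedRing R] {q : R[X]} (hq : q ≠ 0) (h : ∀ k, 0 ≤ q.coeff k) {x : R}
    (hx : q.IsRoot x) : x ≤ 0 := by
  by_contra! hx0
  refine (hx.eq_zero ▸ eval_eq_sum_range (p := q) x).not_lt ?_
  refine Finset.sum_pos' (fun i _ => mul_nonneg (h i) (pow_nonneg hx0.le i))
    ⟨q.natDegree, Finset.self_mem_range_succ _, mul_pos ?_ (pow_pos hx0 _)⟩
  exact (h _).lt_of_ne (leadingCoeff_ne_zero.2 hq).symm

theorem exists_isRoot_derivative_add_C_mul_mem_Ioo (f : ℝ[X]) (a : ℝ) {x y : ℝ} (hxy : x < y)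
    (hx : f.IsRoot x) (hy : f.IsRoot y) :
    ∃ z ∈ Ioo x y, (derivative f + C a * f).IsRoot z := by
  have hderiv : ∀ t, HasDerivAt (fun t => Real.exp (a * t) * f.eval t)
      (Real.exp (a * t) * (derivative f + C a * f).eval t) t := fun t => by
    refine (((hasDerivAt_id' t).const_mul a).exp.mul (f.hasDerivAt t)).congr_deriv ?_
    simp only [eval_add, eval_mul, eval_C]
    ring
  obtain ⟨z, hz, hz0⟩ := exists_hasDerivAt_eq_zero hxy
    (fun t _ => (hderiv t).continuousAt.continuousWithinAt) (by simp [hx.eq_zero, hy.eq_zero])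
    fun t _ => hderiv t
  exact ⟨z, hz, (mul_eq_zero.1 hz0).resolve_left (Real.exp_ne_zero _)⟩

theorem natDegree_derivative_add_C_mul_le (f : ℝ[X]) (a : ℝ) :
    (derivative f + C a * f).natDegree ≤ f.natDegree :=
  natDegree_add_le_of_degree_le ((natDegree_derivative_le f).trans (Nat.sub_le _ _))
    (natDegree_C_mul_le a f)

theorem rootMultiplicity_sub_one_le_rootMultiplicity_derivative_add_C_mul (f : ℝ[X]) (a x : ℝ)
    (hg : derivative f + C a * f ≠ 0) :
    f.rootMultiplicity x - 1 ≤ (derivative f + C a * f).rootMultiplicity x := by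
  rw [le_rootMultiplicity_iff hg]
  refine dvd_add ?_ <|
    ((pow_dvd_pow _ (Nat.sub_le _ _)).trans (pow_rootMultiplicity_dvd f x)).mul_left _
  exact (pow_dvd_pow _ (f.rootMultiplicity_sub_one_le_derivative_rootMultiplicity x)).trans
    (pow_rootMultiplicity_dvd _ x)

theorem card_roots_toFinset_le_card_roots_derivative_add_C_mul_sdiff_roots_succ (f : ℝ[X]) {a : ℝ}
    (hg : derivative f + C a * f ≠ 0) :
    f.roots.toFinset.card ≤
      ((derivative f + C a * f).roots.toFinset \ f.roots.toFinset).card + 1 := by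
  refine Finset.card_le_sdiff_of_interleaved fun x hx y hy hxy _ => ?_
  rw [Multiset.mem_toFinset, mem_roots'] at hx hy
  obtain ⟨z, hz, hz0⟩ := exists_isRoot_derivative_add_C_mul_mem_Ioo f a hxy hx.2 hy.2
  exact ⟨z, Multiset.mem_toFinset.2 ((mem_roots hg).2 hz0), hz⟩

theorem card_roots_le_card_roots_derivative_add_C_mul_succ (f : ℝ[X]) {a : ℝ}
    (hg : derivative f + C a * f ≠ 0) :
    Multiset.card f.roots ≤ Multiset.card (derivative f + C a * f).roots + 1 := by
  set g := derivative f + C a * f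
  calc
    Multiset.card f.roots = ∑ x ∈ f.roots.toFinset, f.roots.count x :=
      (Multiset.toFinset_sum_count_eq _).symm
    _ = ∑ x ∈ f.roots.toFinset, (f.roots.count x - 1 + 1) :=
      (Finset.sum_congr rfl fun _ hx => tsub_add_cancel_of_le <|
        Nat.succ_le_iff.2 <| Multiset.count_pos.2 <| Multiset.mem_toFinset.1 hx).symm
    _ = (∑ x ∈ f.roots.toFinset, (f.rootMultiplicity x - 1)) + f.roots.toFinset.card := by
      simp only [Finset.sum_add_distrib, Finset.card_eq_sum_ones, count_roots]
    _ ≤ (∑ x ∈ f.roots.toFinset, g.rootMultiplicity x) +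
          ((g.roots.toFinset \ f.roots.toFinset).card + 1) :=
      add_le_add
        (Finset.sum_le_sum fun x _ =>
          rootMultiplicity_sub_one_le_rootMultiplicity_derivative_add_C_mul f a x hg)
        (card_roots_toFinset_le_card_roots_derivative_add_C_mul_sdiff_roots_succ f hg)
    _ ≤ (∑ x ∈ f.roots.toFinset, g.roots.count x) +
          ((∑ x ∈ g.roots.toFinset \ f.roots.toFinset, g.roots.count x) + 1) := by
      simp only [← count_roots, Finset.card_eq_sum_ones]
      gcongr with x hx
      rw [Nat.succ_le_iff, Multiset.count_pos, ← Multiset.mem_toFinset]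
      exact (Finset.mem_sdiff.1 hx).1
    _ = Multiset.card g.roots + 1 := by
      rw [← add_assoc, ← Finset.sum_union Finset.disjoint_sdiff, Finset.union_sdiff_self_eq_union,
        ← Multiset.toFinset_sum_count_eq, ← Finset.sum_subset Finset.subset_union_right]
      intro x _ hx₂
      simpa only [Multiset.mem_toFinset, Multiset.count_eq_zero] using hx₂

theorem Splits.derivative_add_C_mul {f : ℝ[X]} (hf : f.Splits) (a : ℝ) :
    (derivative f + C a * f).Splits := by
  rcases eq_or_ne (derivative f + C a * f) 0 with hg | hg
  · rw [hg]; exact Splits.zero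
  refine splits_of_natDegree_le_card_roots_add_one ?_
  calc (derivative f + C a * f).natDegree ≤ f.natDegree :=
        natDegree_derivative_add_C_mul_le f a
    _ = Multiset.card f.roots := hf.natDegree_eq_card_roots
    _ ≤ _ := card_roots_le_card_roots_derivative_add_C_mul_succ f hg

theorem Splits.aeval_derivative {u f : ℝ[X]} (hu : u.Splits) (hf : f.Splits) :
    (aeval (derivative : Module.End ℝ ℝ[X]) u f).Splits := by
  induction hu using Submonoid.closure_induction generalizing f with
  | mem u hu =>
    rcases hu with ⟨a, rfl⟩ | ⟨a, rfl⟩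
    · simpa [smul_eq_C_mul] using hf.C_mul a
    · simpa [smul_eq_C_mul] using hf.derivative_add_C_mul a
  | one => simpa
  | mul u v _ _ hu hv => rw [map_mul, Module.End.mul_apply]; exact hu (hv hf)

end Polynomial

open Nat in
theorem Tfac_eq_aeval_derivative_reverse (p : ℝ[X]) :
    Tfac p = aeval (derivative : Module.End ℝ ℝ[X]) p.reverse
      (C ((p.natDegree ! : ℝ)⁻¹) * X ^ p.natDegree) := by
  set n := p.natDegree
  rw [aeval_eq_sum_range' (Nat.lt_add_one_iff.2 p.reverse_natDegree_le), LinearMap.sum_apply,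
    ← Finset.sum_range_reflect, Tfac]
  refine Finset.sum_congr rfl fun k hk => ?_
  have hk : k ≤ n := Nat.lt_add_one_iff.1 (Finset.mem_range.1 hk)
  rw [Nat.add_sub_cancel, LinearMap.smul_apply, Module.End.pow_apply,
    iterate_derivative_C_inv_factorial_mul_X_pow (by omega), coeff_reverse, revAt_le (by omega),
    Nat.sub_sub_self hk, smul_eq_C_mul, ← mul_assoc, ← C_mul, div_eq_mul_inv]

theorem coeff_Tfac (p : ℝ[X]) (k : ℕ) : (Tfac p).coeff k = p.coeff k / k.factorial := by
  simp only [Tfac, finsetSum_coeff, coeff_C_mul_X_pow, Finset.sum_ite_eq, Finset.mem_range]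
  split_ifs with hk
  · rfl
  · rw [coeff_eq_zero_of_natDegree_lt (by omega), zero_div]

theorem Tfac_ne_zero {p : ℝ[X]} (hp : p ≠ 0) : Tfac p ≠ 0 := fun h => by
  have := coeff_Tfac p p.natDegree
  rw [h, coeff_zero, eq_comm, div_eq_zero_iff] at this
  exact this.elim (leadingCoeff_ne_zero.2 hp) (Nat.cast_ne_zero.2 (Nat.factorial_ne_zero _))

theorem Polynomial.Splits.Tfac {p : ℝ[X]} (hp : p.Splits) : (Tfac p).Splits := by
  rw [Tfac_eq_aeval_derivative_reverse]
  exact hp.reverse.aeval_derivative (Splits.C_mul_X_pow _ _)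

theorem allRealRoots_iff {p : ℝ[X]} : AllRealRoots p ↔ p ≠ 0 ∧ p.Splits := by
  refine ⟨fun hp => ⟨?_, ?_⟩, fun ⟨hp0, hps⟩ z hz => ?_⟩
  · rintro rfl
    simpa using hp Complex.I (by simp)
  · exact Splits.of_splits_map (algebraMap ℝ ℂ) (IsAlgClosed.splits _) fun z hz =>
      ⟨z.re, Complex.ext (by simp) (by simp [hp z (mem_roots'.1 hz).2])⟩
  · obtain ⟨x, rfl⟩ := hps.mem_range_of_isRoot hp0 hz
    simp

theorem stmt_6 (p : ℝ[X]) (hp : AllRealRoots p) (hcoeff : ∀ k, 0 ≤ p.coeff k) :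
    AllRealRoots (Tfac p) ∧
      ∀ z : ℂ, ((Tfac p).map (algebraMap ℝ ℂ)).IsRoot z → z.re ≤ 0 := by
  obtain ⟨hp0, hps⟩ := allRealRoots_iff.1 hp
  have hT0 : Tfac p ≠ 0 := Tfac_ne_zero hp0
  have hTs : (Tfac p).Splits := hps.Tfac
  refine ⟨allRealRoots_iff.2 ⟨hT0, hTs⟩, fun z hz => ?_⟩
  obtain ⟨x, rfl⟩ := hTs.mem_range_of_isRoot hT0 hz
  have hTcoeff : ∀ k, 0 ≤ (Tfac p).coeff k := fun k => by
    rw [coeff_Tfac]; exact div_nonneg (hcoeff k) (Nat.cast_nonneg _)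
  simpa using nonpos_of_isRoot_of_coeff_nonneg hT0 hTcoeff
    ((isRoot_map_iff (algebraMap ℝ ℂ).injective).1 hz)
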